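/- Let (Ω, 𝒜, P) be a probability space, (S, 𝔖) and (T, 𝔗) measurable spaces, and (X, Y) : Ω → S × T a measurable pair such that P_{(X,Y)} ≪ P_X ⊗ P_Y with Radon–Nikodým derivative g = dP_{(X,Y)}/d(P_X ⊗ P_Y). Then β(X, Y) = (1/2) ∫_{S×T} |g − 1| d(P_X ⊗ P_Y). -/

import Mathlib

/-! Let `μ ⊗ ν` be the product of the marginals and `f = g - 1`. For measurable `A`, `B`,
`P(X ∈ A, Y ∈ B) - P(X ∈ A) P(Y ∈ B) = ∫_{A × B} f d(μ ⊗ ν)`, and the pieces of a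
`σ(X)`- and a `σ(Y)`-measurable partition are preimages of sets `A i`, `B j` that are
`μ`- resp. `ν`-almost disjoint. The sum defining `β` is thus `∑ |∫_{A i × B j} f|`, which is at
most `∫ |f|`. Conversely, the finite unions of cells of grids of measurable rectangles form an
algebra generating the product σ-algebra, so `{f ≥ 0}` is approximated in `|f| (μ ⊗ ν)`-measure
by such a union `t`; integrating `f` against the sign `±1` of `t`, which is constant on every
cell, shows that the grid sum is at least `∫ |f| - 2 ∫_{{f ≥ 0} ∆ t} |f|`. -/

open MeasureTheory Real Filter Set
open scoped ENNReal NNReal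

/-- β-mixing coefficient between two sub-σ-algebras. -/
noncomputable def betaMix {Ω : Type*} [MeasurableSpace Ω] (P : Measure Ω)
    (F G : MeasurableSpace Ω) : ℝ :=
  (1 / 2) * sSup { r : ℝ | ∃ (n m : ℕ) (U : Fin n → Set Ω) (V : Fin m → Set Ω),
      (∀ i, MeasurableSet[F] (U i)) ∧ (∀ j, MeasurableSet[G] (V j)) ∧
      Pairwise (Function.onFun Disjoint U) ∧ Pairwise (Function.onFun Disjoint V) ∧
      (⋃ i, U i) = Set.univ ∧ (⋃ j, V j) = Set.univ ∧
      r = ∑ i, ∑ j, |(P (U i ∩ V j)).toReal - (P (U i)).toReal * (P (V j)).toReal| }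

/-- β-mixing coefficient of two random variables. -/
noncomputable def betaRV {Ω S T : Type*} [MeasurableSpace Ω] [MeasurableSpace S]
    [MeasurableSpace T] (P : Measure Ω) (X : Ω → S) (Y : Ω → T) : ℝ :=
  betaMix P (MeasurableSpace.comap X inferInstance) (MeasurableSpace.comap Y inferInstance)

/-- β-mixing coefficients of a process indexed by ℤ. -/
noncomputable def betaProc {Ω S : Type*} [MeasurableSpace Ω] [MeasurableSpace S]
    (P : Measure Ω) (X : ℤ → Ω → S) (n : ℕ) : ℝ :=
  ⨆ k : ℕ, betaMix P
    (⨆ s : ℤ, ⨆ _ : s ≤ (k : ℤ), MeasurableSpace.comap (X s) inferInstance)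
    (⨆ s : ℤ, ⨆ _ : (k : ℤ) + (n : ℤ) ≤ s, MeasurableSpace.comap (X s) inferInstance)

/-- Stationarity of a process indexed by ℤ. -/
def Stationary {Ω S : Type*} [MeasurableSpace Ω] [MeasurableSpace S]
    (P : Measure Ω) (X : ℤ → Ω → S) : Prop :=
  Measure.map (fun ω => fun i : ℤ => X (i + 1) ω) P
    = Measure.map (fun ω => fun i : ℤ => X i ω) P

open Function
open scoped symmDiff

lemma csSup_eq_of_forall_le_of_forall_lt_exists_gt' {α : Type*} [ConditionallyCompleteLinearOrder α]
    [NoMinOrder α] {s : Set α} {b : α} (hle : ∀ a ∈ s, a ≤ b) (hlt : ∀ w < b, ∃ a ∈ s, w < a) :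
    sSup s = b := by
  obtain ⟨w, hw⟩ := exists_lt b
  obtain ⟨a, ha, -⟩ := hlt w hw
  exact csSup_eq_of_forall_le_of_forall_lt_exists_gt ⟨a, ha⟩ hle hlt

section Partition

variable {α β γ ι κ : Type*} [MeasurableSpace α] [MeasurableSpace β]

/-- Empty pieces are allowed, as in the definition of `betaMix`. -/
structure IsMeasurablePartition (A : ι → Set α) : Prop where
  measurableSet : ∀ i, MeasurableSet (A i)
  pairwise_disjoint : Pairwise (Disjoint on A)
  iUnion_eq_univ : ⋃ i, A i = univ

namespace IsMeasurablePartition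

variable {A : ι → Set α}

lemma preimage (hA : IsMeasurablePartition A) {mγ : MeasurableSpace γ} {f : γ → α}
    (hf : Measurable f) :
    IsMeasurablePartition fun i => f ⁻¹' A i where
  measurableSet i := hf (hA.measurableSet i)
  pairwise_disjoint _ _ hij := (hA.pairwise_disjoint hij).preimage f
  iUnion_eq_univ := by rw [← preimage_iUnion, hA.iUnion_eq_univ, preimage_univ]

lemma comp_equiv (hA : IsMeasurablePartition A) (e : κ ≃ ι) : IsMeasurablePartition (A ∘ e) where
  measurableSet k := hA.measurableSet (e k)
  pairwise_disjoint _ _ hkl := hA.pairwise_disjoint (e.injective.ne hkl)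
  iUnion_eq_univ := (e.surjective.iUnion_comp A).trans hA.iUnion_eq_univ

lemma prod (hA : IsMeasurablePartition A) {B : κ → Set β} (hB : IsMeasurablePartition B) :
    IsMeasurablePartition fun p : ι × κ => A p.1 ×ˢ B p.2 where
  measurableSet p := (hA.measurableSet p.1).prod (hB.measurableSet p.2)
  pairwise_disjoint p q hpq := by
    by_cases h : p.1 = q.1
    · exact disjoint_prod.2 (Or.inr (hB.pairwise_disjoint fun h' => hpq (Prod.ext h h')))
    · exact disjoint_prod.2 (Or.inl (hA.pairwise_disjoint h))
  iUnion_eq_univ := by rw [iUnion_prod, hA.iUnion_eq_univ, hB.iUnion_eq_univ, univ_prod_univ]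

lemma inter (hA : IsMeasurablePartition A) {B : κ → Set α} (hB : IsMeasurablePartition B) :
    IsMeasurablePartition fun p : ι × κ => A p.1 ∩ B p.2 :=
  (hA.prod hB).preimage (measurable_id.prodMk measurable_id)

lemma measurableSet_of_forall_subset_or_disjoint [Countable ι] (hA : IsMeasurablePartition A)
    {t : Set α} (ht : ∀ i, A i ⊆ t ∨ Disjoint (A i) t) : MeasurableSet t := by
  have : t = ⋃ i, ⋃ (_ : A i ⊆ t), A i := by
    refine Subset.antisymm (fun x hx => ?_) (iUnion₂_subset fun i hi => hi)
    obtain ⟨i, hxi⟩ := mem_iUnion.1 (hA.iUnion_eq_univ.symm ▸ mem_univ x)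
    have hit : A i ⊆ t := (ht i).resolve_right (not_disjoint_iff.2 ⟨x, hxi, hx⟩)
    exact mem_iUnion₂.2 ⟨i, hit, hxi⟩
  rw [this]
  exact MeasurableSet.iUnion fun i => MeasurableSet.iUnion fun _ => hA.measurableSet i

end IsMeasurablePartition

lemma isMeasurablePartition_compl {s : Set α} (hs : MeasurableSet s) :
    IsMeasurablePartition ![s, sᶜ] where
  measurableSet := Fin.forall_fin_two.2 ⟨hs, hs.compl⟩
  pairwise_disjoint i j hij := by
    fin_cases i <;> fin_cases j <;> simp_all [onFun, disjoint_compl_right, disjoint_compl_left]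
  iUnion_eq_univ := eq_univ_of_forall fun x => mem_iUnion.2 <| by
    by_cases hx : x ∈ s
    · exact ⟨0, hx⟩
    · exact ⟨1, hx⟩

end Partition

section Grid

variable {S T : Type*} [MeasurableSpace S] [MeasurableSpace T]

/-- `t` is a union of cells `A i ×ˢ B j` of a finite grid of measurable rectangles. -/
def IsGridSet (t : Set (S × T)) : Prop :=
  ∃ (n m : ℕ) (A : Fin n → Set S) (B : Fin m → Set T), IsMeasurablePartition A ∧
    IsMeasurablePartition B ∧ ∀ i j, A i ×ˢ B j ⊆ t ∨ Disjoint (A i ×ˢ B j) t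

lemma isGridSet_prod {s : Set S} {t : Set T} (hs : MeasurableSet s) (ht : MeasurableSet t) :
    IsGridSet (s ×ˢ t) := by
  refine ⟨2, 2, ![s, sᶜ], ![t, tᶜ], isMeasurablePartition_compl hs,
    isMeasurablePartition_compl ht, fun i j => ?_⟩
  fin_cases i <;> fin_cases j <;> simp [Set.disjoint_prod, disjoint_compl_left]

lemma IsGridSet.measurableSet {t : Set (S × T)} (ht : IsGridSet t) : MeasurableSet t := by
  obtain ⟨n, m, A, B, hA, hB, hAB⟩ := ht
  exact (hA.prod hB).measurableSet_of_forall_subset_or_disjoint fun p => hAB p.1 p.2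

lemma IsGridSet.compl {t : Set (S × T)} (ht : IsGridSet t) : IsGridSet tᶜ := by
  obtain ⟨n, m, A, B, hA, hB, hAB⟩ := ht
  refine ⟨n, m, A, B, hA, hB, fun i j => ?_⟩
  rw [subset_compl_iff_disjoint_right, disjoint_compl_right_iff_subset]
  exact (hAB i j).symm

lemma IsGridSet.union {s t : Set (S × T)} (hs : IsGridSet s) (ht : IsGridSet t) :
    IsGridSet (s ∪ t) := by
  obtain ⟨n, m, A, B, hA, hB, hAB⟩ := hs
  obtain ⟨n', m', A', B', hA', hB', hAB'⟩ := ht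
  refine ⟨n * n', m * m', _, _, (hA.inter hA').comp_equiv finProdFinEquiv.symm,
    (hB.inter hB').comp_equiv finProdFinEquiv.symm, fun k l => ?_⟩
  suffices ∀ i i' j j', (A i ∩ A' i') ×ˢ (B j ∩ B' j') ⊆ s ∪ t ∨
      Disjoint ((A i ∩ A' i') ×ˢ (B j ∩ B' j')) (s ∪ t) from this _ _ _ _
  intro i i' j j'
  have h : (A i ∩ A' i') ×ˢ (B j ∩ B' j') ⊆ A i ×ˢ B j :=
    prod_mono inter_subset_left inter_subset_left
  have h' : (A i ∩ A' i') ×ˢ (B j ∩ B' j') ⊆ A' i' ×ˢ B' j' :=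
    prod_mono inter_subset_right inter_subset_right
  rcases hAB i j, hAB' i' j' with ⟨hs | hs, ht | ht⟩
  · exact Or.inl (h.trans (hs.trans subset_union_left))
  · exact Or.inl (h.trans (hs.trans subset_union_left))
  · exact Or.inl (h'.trans (ht.trans subset_union_right))
  · exact Or.inr (disjoint_union_right.2 ⟨hs.mono_left h, ht.mono_left h'⟩)

lemma isSetAlgebra_isGridSet : IsSetAlgebra {t : Set (S × T) | IsGridSet t} where
  empty_mem := empty_prod (t := (univ : Set T)) ▸ isGridSet_prod .empty .univ
  compl_mem _ ht := ht.compl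
  union_mem _ _ hs ht := hs.union ht

lemma generateFrom_isGridSet :
    MeasurableSpace.generateFrom {t : Set (S × T) | IsGridSet t} = Prod.instMeasurableSpace := by
  refine le_antisymm (MeasurableSpace.generateFrom_le fun t ht => ht.measurableSet) ?_
  rw [← generateFrom_prod]
  exact MeasurableSpace.generateFrom_mono
    (image2_subset_iff.2 fun s hs t ht => isGridSet_prod hs ht)

lemma exists_isGridSet_measure_symmDiff_lt (ρ : Measure (S × T)) [IsFiniteMeasure ρ]
    {E : Set (S × T)} (hE : MeasurableSet E) {ε : ℝ} (hε : 0 < ε) :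
    ∃ t, IsGridSet t ∧ ρ (E ∆ t) < ENNReal.ofReal ε :=
  (Measure.MeasureDense.of_generateFrom_isSetAlgebra_finite ρ isSetAlgebra_isGridSet
    generateFrom_isGridSet.symm).approx E hE (measure_ne_top ρ E) ε hε

end Grid

lemma abs_le_piecewise_neg_add_indicator {α : Type*} {f : α → ℝ} (t : Set α)
    [DecidablePred (· ∈ t)] (x : α) :
    |f x| ≤ t.piecewise f (-f) x + 2 * ({y | 0 ≤ f y} ∆ t).indicator (fun y => |f y|) x := by
  by_cases hx : x ∈ t <;> by_cases hfx : 0 ≤ f x <;>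
    simp only [piecewise, indicator, mem_symmDiff, mem_ofPred_eq, hx, hfx, Pi.neg_apply, if_true,
      if_false, not_true, not_false_eq_true, and_true, and_false, or_false, false_or] <;>
    rcases abs_cases (f x) with ⟨h, h'⟩ | ⟨h, h'⟩ <;> linarith

section Integral

variable {α ι : Type*} [MeasurableSpace α] {μ : Measure α} {f : α → ℝ}

lemma withDensity_ofReal_apply_eq_ofReal_setIntegral {s : Set α} (hs : MeasurableSet s)
    (hf : IntegrableOn f s μ) (hf0 : 0 ≤ᵐ[μ.restrict s] f) :
    μ.withDensity (fun x => ENNReal.ofReal (f x)) s = ENNReal.ofReal (∫ x in s, f x ∂μ) := by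
  rw [withDensity_apply _ hs, ofReal_integral_eq_lintegral_ofReal hf hf0]

lemma integrable_of_isFiniteMeasure_withDensity_ofReal (hf : AEStronglyMeasurable f μ)
    (hf0 : 0 ≤ᵐ[μ] f) [IsFiniteMeasure (μ.withDensity fun x => ENNReal.ofReal (f x))] :
    Integrable f μ := by
  refine ⟨hf, (hasFiniteIntegral_iff_ofReal hf0).2 ?_⟩
  simpa [withDensity_apply] using measure_lt_top (μ.withDensity fun x => ENNReal.ofReal (f x)) univ

lemma sum_abs_setIntegral_le_integral_abs [Fintype ι] {C : ι → Set α}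
    (hC : ∀ i, NullMeasurableSet (C i) μ) (hd : Pairwise (AEDisjoint μ on C))
    (hf : Integrable f μ) :
    ∑ i, |∫ x in C i, f x ∂μ| ≤ ∫ x, |f x| ∂μ :=
  calc ∑ i, |∫ x in C i, f x ∂μ|
      ≤ ∑ i, ∫ x in C i, |f x| ∂μ := Finset.sum_le_sum fun i _ => abs_integral_le_integral_abs
    _ = ∫ x in ⋃ i, C i, |f x| ∂μ := by
      rw [integral_iUnion_ae hC hd hf.abs.integrableOn, tsum_fintype]
    _ ≤ ∫ x, |f x| ∂μ := setIntegral_le_integral hf.abs (ae_of_all _ fun _ => abs_nonneg _)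

lemma integral_abs_le_integral_piecewise_neg_add (hf : Integrable f μ)
    (hE : MeasurableSet {y | 0 ≤ f y}) {t : Set α} (ht : MeasurableSet t) [DecidablePred (· ∈ t)] :
    ∫ x, |f x| ∂μ ≤ ∫ x, t.piecewise f (-f) x ∂μ + 2 * ∫ x in {y | 0 ≤ f y} ∆ t, |f x| ∂μ := by
  have hp : Integrable (t.piecewise f (-f)) μ :=
    Integrable.piecewise ht hf.integrableOn hf.neg.integrableOn
  have hi : Integrable (fun x => 2 * ({y | 0 ≤ f y} ∆ t).indicator (fun y => |f y|) x) μ :=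
    (hf.abs.indicator (hE.symmDiff ht)).const_mul 2
  rw [← integral_indicator (hE.symmDiff ht), ← integral_const_mul, ← integral_add hp hi]
  exact integral_mono hf.abs (hp.add hi) (abs_le_piecewise_neg_add_indicator t)

lemma integral_piecewise_neg_le_sum_abs_setIntegral [Fintype ι] {C : ι → Set α}
    (hC : IsMeasurablePartition C) (hf : Integrable f μ) {t : Set α} (ht : MeasurableSet t)
    [DecidablePred (· ∈ t)] (hCt : ∀ i, C i ⊆ t ∨ Disjoint (C i) t) :
    ∫ x, t.piecewise f (-f) x ∂μ ≤ ∑ i, |∫ x in C i, f x ∂μ| := by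
  have hp : Integrable (t.piecewise f (-f)) μ :=
    Integrable.piecewise ht hf.integrableOn hf.neg.integrableOn
  rw [← setIntegral_univ, ← hC.iUnion_eq_univ,
    integral_iUnion_fintype hC.measurableSet hC.pairwise_disjoint fun i => hp.integrableOn]
  refine Finset.sum_le_sum fun i _ => ?_
  rcases hCt i with h | h
  · rw [setIntegral_congr_fun (hC.measurableSet i) ((piecewise_eqOn t f (-f)).mono h)]
    exact le_abs_self _
  · rw [setIntegral_congr_fun (hC.measurableSet i)
      ((piecewise_eqOn_compl t f (-f)).mono (subset_compl_iff_disjoint_right.2 h)),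
      Pi.neg_def, integral_neg]
    exact neg_le_abs _

end Integral

lemma exists_isMeasurablePartition_lt_sum_abs_setIntegral {S T : Type*} [MeasurableSpace S]
    [MeasurableSpace T] {μ : Measure (S × T)} {f : S × T → ℝ} (hfm : Measurable f)
    (hf : Integrable f μ) {w : ℝ} (hw : w < ∫ z, |f z| ∂μ) :
    ∃ (n m : ℕ) (A : Fin n → Set S) (B : Fin m → Set T), IsMeasurablePartition A ∧
      IsMeasurablePartition B ∧ w < ∑ i, ∑ j, |∫ z in A i ×ˢ B j, f z ∂μ| := by
  classical
  have hE : MeasurableSet {z | 0 ≤ f z} := measurableSet_le measurable_const hfm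
  have := isFiniteMeasure_withDensity_ofReal hf.abs.hasFiniteIntegral
  obtain ⟨t, ht, hEt⟩ := exists_isGridSet_measure_symmDiff_lt
    (μ.withDensity fun z => ENNReal.ofReal |f z|) hE
    (ε := (∫ z, |f z| ∂μ - w) / 2) (by linarith)
  have htm : MeasurableSet t := ht.measurableSet
  have hsmall : ∫ z in {z | 0 ≤ f z} ∆ t, |f z| ∂μ < (∫ z, |f z| ∂μ - w) / 2 := by
    rw [withDensity_ofReal_apply_eq_ofReal_setIntegral (hE.symmDiff htm)
      hf.abs.integrableOn (ae_of_all _ fun _ => abs_nonneg _)] at hEt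
    exact (ENNReal.ofReal_lt_ofReal_iff (by linarith)).1 hEt
  obtain ⟨n, m, A, B, hA, hB, hAB⟩ := ht
  refine ⟨n, m, A, B, hA, hB, ?_⟩
  calc w < ∫ z, |f z| ∂μ - 2 * ∫ z in {z | 0 ≤ f z} ∆ t, |f z| ∂μ := by linarith
    _ ≤ ∫ z, t.piecewise f (-f) z ∂μ := by
      linarith [integral_abs_le_integral_piecewise_neg_add hf hE htm]
    _ ≤ ∑ p : Fin n × Fin m, |∫ z in A p.1 ×ˢ B p.2, f z ∂μ| :=
      integral_piecewise_neg_le_sum_abs_setIntegral (hA.prod hB) hf htm fun p => hAB p.1 p.2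
    _ = ∑ i, ∑ j, |∫ z in A i ×ˢ B j, f z ∂μ| :=
      Fintype.sum_prod_type' fun i j => |∫ z in A i ×ˢ B j, f z ∂μ|

lemma pairwise_aedisjoint_prod {α β ι κ : Type*} [MeasurableSpace α] [MeasurableSpace β]
    {μ : Measure α} {ν : Measure β} {A : ι → Set α} {B : κ → Set β}
    (hA : Pairwise (AEDisjoint μ on A)) (hB : Pairwise (AEDisjoint ν on B)) :
    Pairwise (AEDisjoint (μ.prod ν) on fun p : ι × κ => A p.1 ×ˢ B p.2) := by
  intro p q hpq
  by_cases h : p.1 = q.1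
  · exact ((hB fun h' => hpq (Prod.ext h h')).preimage Measure.quasiMeasurePreserving_snd).mono
      (fun _ hz => hz.2) (fun _ hz => hz.2)
  · exact ((hA h).preimage Measure.quasiMeasurePreserving_fst).mono
      (fun _ hz => hz.1) (fun _ hz => hz.1)

lemma aedisjoint_map_of_disjoint_preimage {α β : Type*} [MeasurableSpace α] [MeasurableSpace β]
    {μ : Measure α} {f : α → β} (hf : Measurable f) {s t : Set β} (hs : MeasurableSet s)
    (ht : MeasurableSet t) (h : Disjoint (f ⁻¹' s) (f ⁻¹' t)) : AEDisjoint (μ.map f) s t := by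
  rw [AEDisjoint, Measure.map_apply hf (hs.inter ht), preimage_inter, h.inter_eq, measure_empty]

section JointLaw

variable {Ω S T : Type*} [MeasurableSpace Ω] [MeasurableSpace S] [MeasurableSpace T]
  {P : Measure Ω} [IsFiniteMeasure P] {X : Ω → S} {Y : Ω → T} {g : S × T → ℝ}

lemma measure_inter_preimage_sub_mul_eq_setIntegral (hX : Measurable X) (hY : Measurable Y)
    (hg : Integrable g ((P.map X).prod (P.map Y))) (hg0 : 0 ≤ᵐ[(P.map X).prod (P.map Y)] g)
    (hdens : P.map (fun ω => (X ω, Y ω)) =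
      ((P.map X).prod (P.map Y)).withDensity fun z => ENNReal.ofReal (g z))
    {A : Set S} {B : Set T} (hA : MeasurableSet A) (hB : MeasurableSet B) :
    (P (X ⁻¹' A ∩ Y ⁻¹' B)).toReal - (P (X ⁻¹' A)).toReal * (P (Y ⁻¹' B)).toReal =
      ∫ z in A ×ˢ B, (g z - 1) ∂((P.map X).prod (P.map Y)) := by
  have hAB := hA.prod hB
  have hjoint : P (X ⁻¹' A ∩ Y ⁻¹' B) =
      ENNReal.ofReal (∫ z in A ×ˢ B, g z ∂(P.map X).prod (P.map Y)) := by
    rw [← mk_preimage_prod, ← Measure.map_apply (hX.prodMk hY) hAB, hdens,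
      withDensity_ofReal_apply_eq_ofReal_setIntegral hAB hg.integrableOn (ae_restrict_of_ae hg0)]
  have hprod : (P (X ⁻¹' A)).toReal * (P (Y ⁻¹' B)).toReal =
      ∫ z in A ×ˢ B, (1 : ℝ) ∂(P.map X).prod (P.map Y) := by
    rw [setIntegral_const, smul_eq_mul, mul_one, measureReal_def, Measure.prod_prod,
      ENNReal.toReal_mul, Measure.map_apply hX hA, Measure.map_apply hY hB]
  rw [hjoint, hprod, ENNReal.toReal_ofReal (integral_nonneg_of_ae (ae_restrict_of_ae hg0)),
    integral_sub hg.integrableOn (integrable_const 1).integrableOn]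

lemma sum_abs_measure_inter_sub_mul_le (hX : Measurable X) (hY : Measurable Y)
    (hg : Integrable g ((P.map X).prod (P.map Y))) (hg0 : 0 ≤ᵐ[(P.map X).prod (P.map Y)] g)
    (hdens : P.map (fun ω => (X ω, Y ω)) =
      ((P.map X).prod (P.map Y)).withDensity fun z => ENNReal.ofReal (g z))
    {n m : ℕ} {U : Fin n → Set Ω} {V : Fin m → Set Ω}
    (hU : ∀ i, MeasurableSet[MeasurableSpace.comap X ‹_›] (U i))
    (hV : ∀ j, MeasurableSet[MeasurableSpace.comap Y ‹_›] (V j))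
    (hdU : Pairwise (Disjoint on U)) (hdV : Pairwise (Disjoint on V)) :
    ∑ i, ∑ j, |(P (U i ∩ V j)).toReal - (P (U i)).toReal * (P (V j)).toReal| ≤
      ∫ z, |g z - 1| ∂((P.map X).prod (P.map Y)) := by
  choose A hA hAU using hU
  choose B hB hBV using hV
  have hdA : Pairwise (AEDisjoint (P.map X) on A) := fun i k hik =>
    aedisjoint_map_of_disjoint_preimage hX (hA i) (hA k) (by rw [hAU, hAU]; exact hdU hik)
  have hdB : Pairwise (AEDisjoint (P.map Y) on B) := fun j l hjl =>
    aedisjoint_map_of_disjoint_preimage hY (hB j) (hB l) (by rw [hBV, hBV]; exact hdV hjl)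
  simp_rw [← hAU, ← hBV,
    measure_inter_preimage_sub_mul_eq_setIntegral hX hY hg hg0 hdens (hA _) (hB _)]
  rw [← Fintype.sum_prod_type' fun i j => |∫ z in A i ×ˢ B j, (g z - 1) ∂(P.map X).prod (P.map Y)|]
  exact sum_abs_setIntegral_le_integral_abs (fun p => ((hA p.1).prod (hB p.2)).nullMeasurableSet)
    (pairwise_aedisjoint_prod hdA hdB) (hg.sub (integrable_const 1))

end JointLaw

/-- Equation (4): if the joint law of `(X, Y)` is absolutely continuous
with respect to the product of the marginals with Radon–Nikodým derivative `g`, then the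
β-mixing coefficient equals half the `L¹`-distance of `g` from `1`. -/
theorem beta_mixing_eq_total_variation
    {Ω S T : Type*} [MeasurableSpace Ω] [MeasurableSpace S] [MeasurableSpace T]
    (P : Measure Ω) [IsProbabilityMeasure P]
    (X : Ω → S) (Y : Ω → T) (hX : Measurable X) (hY : Measurable Y)
    (g : S × T → ℝ) (hg : Measurable g) (hg0 : ∀ z, 0 ≤ g z)
    (hdens : Measure.map (fun ω => (X ω, Y ω)) P
      = ((P.map X).prod (P.map Y)).withDensity (fun z => ENNReal.ofReal (g z))) :
    betaRV P X Y = (1 / 2) * ∫ z, |g z - 1| ∂((P.map X).prod (P.map Y)) := by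
  have : IsFiniteMeasure (((P.map X).prod (P.map Y)).withDensity fun z => ENNReal.ofReal (g z)) :=
    hdens ▸ inferInstance
  have hgi : Integrable g ((P.map X).prod (P.map Y)) :=
    integrable_of_isFiniteMeasure_withDensity_ofReal hg.aestronglyMeasurable (ae_of_all _ hg0)
  rw [betaRV, betaMix]
  congr 1
  apply csSup_eq_of_forall_le_of_forall_lt_exists_gt'
  · rintro r ⟨n, m, U, V, hU, hV, hdU, hdV, -, -, rfl⟩
    exact sum_abs_measure_inter_sub_mul_le hX hY hgi (ae_of_all _ hg0) hdens hU hV hdU hdV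
  · intro w hw
    obtain ⟨n, m, A, B, hA, hB, hlt⟩ := exists_isMeasurablePartition_lt_sum_abs_setIntegral
      (f := fun z => g z - 1) (hg.sub measurable_const) (hgi.sub (integrable_const 1)) hw
    obtain ⟨hUm, hdU, hUu⟩ := hA.preimage (comap_measurable X)
    obtain ⟨hVm, hdV, hVu⟩ := hB.preimage (comap_measurable Y)
    refine ⟨_, ⟨n, m, _, _, hUm, hVm, hdU, hdV, hUu, hVu, rfl⟩, ?_⟩
    simpa only [measure_inter_preimage_sub_mul_eq_setIntegral hX hY hgi (ae_of_all _ hg0) hdens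
      (hA.measurableSet _) (hB.measurableSet _)] using hlt
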